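/- Let a, b1, b2 > 0 and let x, y ∈ [0,1) satisfy |x−y| < 1−x and |x−y| < 1−y. Then g_{a,b1,b2}(x,y) = g_{a,b2,b1}(y,x). -/

import Mathlib

open Real MeasureTheory

/-- Rising factorial (Pochhammer symbol) `(a)_k`. -/
noncomputable def poch (a : ℝ) (k : ℕ) : ℝ := (ascPochhammer ℝ k).eval a

/-- Euler beta function `B(p,q) = Γ(p)Γ(q)/Γ(p+q)`. -/
noncomputable def eulerBeta (p q : ℝ) : ℝ := Real.Gamma p * Real.Gamma q / Real.Gamma (p + q)

/-- Digamma function `ψ(x) = Γ'(x)/Γ(x)`. -/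
noncomputable def psi (x : ℝ) : ℝ := deriv Real.Gamma x / Real.Gamma x

/-- General term of the double series for `B(a,b₁+b₂)·F₁(a;b₁,b₂;a+b₁+b₂;x,y)`. -/
noncomputable def F1term (a b1 b2 x y : ℝ) (p : ℕ × ℕ) : ℝ :=
  poch a (p.1 + p.2) * poch b1 p.1 * poch b2 p.2 * x ^ p.1 * y ^ p.2 /
    (poch (a + b1 + b2) (p.1 + p.2) * (Nat.factorial p.1 : ℝ) * (Nat.factorial p.2 : ℝ))

/-- `f_{a,b₁,b₂}(x,y) = B(a,b₁+b₂)·F₁(a;b₁,b₂;a+b₁+b₂;x,y)` as a double series. -/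
noncomputable def f (a b1 b2 x y : ℝ) : ℝ :=
  eulerBeta a (b1 + b2) * ∑' p : ℕ × ℕ, F1term a b1 b2 x y p

/-- The approximation `g_{a,b₁,b₂}(x,y)`. -/
noncomputable def g (a b1 b2 x y : ℝ) : ℝ :=
  Real.log (1 / (1 - x)) + 2 * psi 1 - psi a - psi (b1 + b2) +
    ∑' k : ℕ, poch b2 (k + 1) / ((k + 1 : ℝ) * poch (b1 + b2) (k + 1)) *
      ((y - x) / (1 - x)) ^ (k + 1)

/-!
Put `z = (y - x) / (1 - x)`. Then `(x - y) / (1 - y) = -z / (1 - z)` and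
`log (1 / (1 - x)) = log (1 / (1 - y)) + log (1 - z)`, so with `A_b(k) = (b)_{k+1} / ((k+1) (b₁+b₂)_{k+1})`
the claim becomes the transformation formula
`∑ A_{b₁}(k) (-z / (1 - z))^{k+1} = ∑ A_{b₂}(n) z^{n+1} + log (1 - z)`.
For `|z| < 1/2` the left side is an absolutely convergent double series after expanding
`(1 - z)^{-(k+1)}`; summing it along diagonals, the Chu–Vandermonde identity
`∑ₖ (-1)^k C(N,k) (b)_k / (c)_k = (c - b)_N / (c)_N` turns the coefficient of `z^{n+1}` into
`A_{b₂}(n) - 1 / (n + 1)`, and `∑ z^{n+1} / (n + 1) = -log (1 - z)`.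
Exchanging `x` and `y` if necessary, `x ≤ y` and then the hypotheses give `0 ≤ z < 1/2`.
-/

open Finset fwdDiff

@[simp]
lemma poch_zero (b : ℝ) : poch b 0 = 1 := by
  simp [poch]

lemma poch_succ (b : ℝ) (k : ℕ) : poch b (k + 1) = poch b k * (b + k) := by
  simp [poch, ascPochhammer_succ_eval]

lemma poch_succ_left (b : ℝ) (k : ℕ) : poch b (k + 1) = b * poch (b + 1) k := by
  simp [poch, ascPochhammer_succ_left, Polynomial.eval_comp]

lemma poch_pos {b : ℝ} (hb : 0 < b) (k : ℕ) : 0 < poch b k :=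
  ascPochhammer_pos k b hb

lemma poch_le_poch {b c : ℝ} (hb : 0 < b) (hbc : b ≤ c) (k : ℕ) : poch b k ≤ poch c k := by
  induction k with
  | zero => simp
  | succ k ih =>
    rw [poch_succ, poch_succ]
    gcongr
    exact (poch_pos (hb.trans_le hbc) k).le

lemma fwdDiff_poch_div (b : ℝ) {c : ℝ} (hc : 0 < c) :
    Δ_[1] (fun m : ℕ => poch b m / poch c m) =
      fun m => -((c - b) / c) * (poch b m / poch (c + 1) m) := by
  funext m
  have hcm : c + m ≠ 0 := by positivity
  have hpoch : poch c m = c * poch (c + 1) m / (c + m) := by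
    rw [eq_div_iff hcm, ← poch_succ, poch_succ_left]
  have hc1m := (poch_pos (by linarith : 0 < c + 1) m).ne'
  simp only [fwdDiff]
  rw [poch_succ, poch_succ, hpoch]
  field_simp
  ring

lemma fwdDiff_iter_poch_div (b : ℝ) (N : ℕ) {c : ℝ} (hc : 0 < c) :
    Δ_[1] ^[N] (fun m : ℕ => poch b m / poch c m) =
      fun m => (-1) ^ N * (poch (c - b) N / poch c N) * (poch b m / poch (c + N) m) := by
  induction N generalizing c with
  | zero => simp
  | succ N ih =>
    have hc1 : 0 < c + 1 := by linarith
    have hshift : c + 1 - b = c - b + 1 := by ring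
    have hc1N := (poch_pos hc1 N).ne'
    rw [Function.iterate_succ_apply, fwdDiff_poch_div b hc]
    change Δ_[1] ^[N] ((-((c - b) / c)) • fun m : ℕ => poch b m / poch (c + 1) m) = _
    rw [fwdDiff_iter_const_smul, ih hc1]
    funext m
    simp only [Pi.smul_apply, smul_eq_mul, poch_succ_left (c - b), poch_succ_left c, hshift]
    push_cast
    field_simp
    ring_nf

/-- The Chu–Vandermonde identity `₂F₁(-N, b; c; 1) = (c - b)_N / (c)_N`. -/
theorem sum_range_alternating_choose_poch_div (b : ℝ) {c : ℝ} (hc : 0 < c) (N : ℕ) :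
    ∑ k ∈ range (N + 1), (-1) ^ k * (N.choose k : ℝ) * (poch b k / poch c k) =
      poch (c - b) N / poch c N := by
  have h := congrFun (fwdDiff_iter_poch_div b N hc) 0
  rw [fwdDiff_iter_eq_sum_shift] at h
  simp only [zero_add, nsmul_eq_mul, mul_one, Nat.cast_id, poch_zero, div_one] at h
  calc ∑ k ∈ range (N + 1), (-1) ^ k * (N.choose k : ℝ) * (poch b k / poch c k)
      = (-1) ^ N * ∑ k ∈ range (N + 1),
          ((-1 : ℤ) ^ (N - k) * N.choose k) • (poch b k / poch c k) := by
        rw [mul_sum]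
        refine sum_congr rfl fun k hk => ?_
        obtain ⟨j, rfl⟩ := Nat.exists_eq_add_of_le (Nat.lt_succ_iff.mp (mem_range.mp hk))
        rw [Nat.add_sub_cancel_left, zsmul_eq_mul]
        push_cast
        ring_nf
        simp [pow_mul']
    _ = poch (c - b) N / poch c N := by
        rw [h, ← mul_assoc, ← pow_add, ← two_mul, pow_mul, neg_one_sq, one_pow, one_mul]

noncomputable def gCoeff (b c : ℝ) (k : ℕ) : ℝ := poch b (k + 1) / ((k + 1 : ℝ) * poch c (k + 1))

lemma abs_gCoeff_le_one {b c : ℝ} (hb : 0 < b) (hbc : b ≤ c) (k : ℕ) : |gCoeff b c k| ≤ 1 := by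
  have hc : 0 < poch c (k + 1) := poch_pos (hb.trans_le hbc) _
  rw [gCoeff, abs_of_nonneg (by have := poch_pos hb (k + 1); positivity), div_le_one (by positivity)]
  calc poch b (k + 1) ≤ 1 * poch c (k + 1) := by rw [one_mul]; exact poch_le_poch hb hbc _
    _ ≤ (k + 1 : ℝ) * poch c (k + 1) := by gcongr; simp

lemma sum_range_alternating_choose_gCoeff (b : ℝ) {c : ℝ} (hc : 0 < c) (n : ℕ) :
    ∑ k ∈ range (n + 1), (-1) ^ (k + 1) * (n.choose k : ℝ) * gCoeff b c k =
      gCoeff (c - b) c n - 1 / (n + 1) := by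
  have hn : (n + 1 : ℝ) ≠ 0 := by positivity
  have hchu := sum_range_alternating_choose_poch_div b hc (n + 1)
  rw [sum_range_succ'] at hchu
  calc ∑ k ∈ range (n + 1), (-1) ^ (k + 1) * (n.choose k : ℝ) * gCoeff b c k
      = (∑ k ∈ range (n + 1), (-1) ^ (k + 1) * ((n + 1).choose (k + 1) : ℝ) *
          (poch b (k + 1) / poch c (k + 1))) / (n + 1) := by
        rw [sum_div]
        refine sum_congr rfl fun k _ => ?_
        have hchoose : ((n + 1 : ℕ) : ℝ) * n.choose k = (n + 1).choose (k + 1) * (k + 1 : ℕ) := by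
          exact_mod_cast Nat.add_one_mul_choose_eq n k
        have hck := (poch_pos hc (k + 1)).ne'
        push_cast at hchoose
        rw [gCoeff]
        field_simp
        linear_combination poch b (k + 1) * hchoose
    _ = gCoeff (c - b) c n - 1 / (n + 1) := by
        simp only [pow_zero, Nat.choose_zero_right, Nat.cast_one, poch_zero, div_one, one_mul] at hchu
        rw [eq_sub_of_add_eq hchu, gCoeff]
        field_simp

theorem Summable.tsum_eq_tsum_sum_antidiagonal {α A : Type*} [AddCommMonoid α] [TopologicalSpace α]
    [ContinuousAdd α] [T3Space α] [AddCommMonoid A] [HasAntidiagonal A] {f : A × A → α}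
    (hf : Summable f) : ∑' p, f p = ∑' n, ∑ p ∈ antidiagonal n, f p := by
  rw [← HasAntidiagonal.sigmaAntidiagonalEquivProd.tsum_eq,
    Summable.tsum_sigma' (f := fun c => f (HasAntidiagonal.sigmaAntidiagonalEquivProd c))
      (fun n => (hasSum_fintype _).summable)
      (HasAntidiagonal.sigmaAntidiagonalEquivProd.summable_iff.2 hf)]
  exact tsum_congr fun n => (tsum_fintype _).trans (sum_coe_sort _ _)

lemma summable_pow_mul_choose_mul_pow {r : ℝ} (hr0 : 0 ≤ r) (hr : r < 1 / 2) :
    Summable fun p : ℕ × ℕ => r ^ (p.1 + 1) * (((p.2 + p.1).choose p.1 : ℝ) * r ^ p.2) := by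
  have hr1 : ‖r‖ < 1 := by rw [Real.norm_of_nonneg hr0]; linarith
  have hq : r / (1 - r) < 1 := by rw [div_lt_one (by linarith)]; linarith
  have hfiber (k : ℕ) : HasSum (fun j : ℕ => r ^ (k + 1) * (((j + k).choose k : ℝ) * r ^ j))
      ((r / (1 - r)) ^ (k + 1)) := by
    have h := (hasSum_choose_mul_geometric_of_norm_lt_one k hr1).mul_left (r ^ (k + 1))
    rwa [mul_one_div, ← div_pow] at h
  refine (summable_prod_of_nonneg fun p => ?_).2 ⟨fun k => (hfiber k).summable, ?_⟩
  · dsimp only [Pi.zero_apply]; positivity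
  simp only [fun k => (hfiber k).tsum_eq]
  exact (summable_nat_add_iff 1).2
    (summable_geometric_of_lt_one (div_nonneg hr0 (by linarith)) hq)

/-- Euler's transformation: substituting `w = -z / (1 - z)` into a power series in `w`. -/
theorem tsum_mul_neg_div_one_sub_pow {a : ℕ → ℝ} {C z : ℝ} (ha : ∀ k, |a k| ≤ C)
    (hz : |z| < 1 / 2) :
    ∑' k, a k * (-z / (1 - z)) ^ (k + 1) =
      ∑' n, (∑ k ∈ range (n + 1), (-1) ^ (k + 1) * (n.choose k : ℝ) * a k) * z ^ (n + 1) := by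
  have hz1 : ‖z‖ < 1 := by rw [Real.norm_eq_abs]; linarith
  set F : ℕ × ℕ → ℝ := fun p => a p.1 * (-z) ^ (p.1 + 1) * (((p.2 + p.1).choose p.1 : ℝ) * z ^ p.2)
  have hfiber (k : ℕ) : HasSum (fun j => F (k, j)) (a k * (-z / (1 - z)) ^ (k + 1)) := by
    have h := (hasSum_choose_mul_geometric_of_norm_lt_one k hz1).mul_left (a k * (-z) ^ (k + 1))
    rwa [show a k * (-z) ^ (k + 1) * (1 / (1 - z) ^ (k + 1)) = a k * (-z / (1 - z)) ^ (k + 1) by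
      rw [div_pow]; ring] at h
  have hF : Summable F := by
    refine Summable.of_norm_bounded
      ((summable_pow_mul_choose_mul_pow (abs_nonneg z) hz).mul_left C) fun p => ?_
    simp only [F, norm_mul, norm_pow, norm_neg, Real.norm_eq_abs, Nat.abs_cast]
    rw [mul_assoc]
    gcongr
    exact ha _
  have hdiag (n : ℕ) : ∑ p ∈ antidiagonal n, F p =
      (∑ k ∈ range (n + 1), (-1) ^ (k + 1) * (n.choose k : ℝ) * a k) * z ^ (n + 1) := by
    rw [Nat.sum_antidiagonal_eq_sum_range_succ_mk, sum_mul]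
    refine sum_congr rfl fun k hk => ?_
    obtain ⟨j, rfl⟩ := Nat.exists_eq_add_of_le (Nat.lt_succ_iff.mp (mem_range.mp hk))
    simp only [F, Nat.add_sub_cancel_left, add_comm j k, neg_pow z]
    rw [add_right_comm, pow_add]
    ring
  rw [← tsum_congr fun k => (hfiber k).tsum_eq, ← hF.tsum_prod' fun k => (hfiber k).summable,
    hF.tsum_eq_tsum_sum_antidiagonal]
  exact tsum_congr hdiag

theorem tsum_gCoeff_mul_neg_div_one_sub_pow {b1 b2 z : ℝ} (hb1 : 0 < b1) (hb2 : 0 < b2)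
    (hz : |z| < 1 / 2) :
    ∑' k, gCoeff b1 (b1 + b2) k * (-z / (1 - z)) ^ (k + 1) =
      ∑' k, gCoeff b2 (b1 + b2) k * z ^ (k + 1) + log (1 - z) := by
  have hz1 : |z| < 1 := by linarith
  have hsummable : Summable fun k => gCoeff b2 (b1 + b2) k * z ^ (k + 1) := by
    refine Summable.of_norm_bounded ((summable_geometric_of_lt_one (abs_nonneg z) hz1).mul_left |z|)
      fun k => ?_
    rw [norm_mul, norm_pow, Real.norm_eq_abs, Real.norm_eq_abs, pow_succ']
    exact mul_le_of_le_one_left (by positivity) (abs_gCoeff_le_one hb2 (by linarith) k)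
  have hsum := (hsummable.hasSum.sub (hasSum_pow_div_log_of_abs_lt_one hz1)).tsum_eq
  rw [sub_neg_eq_add] at hsum
  rw [tsum_mul_neg_div_one_sub_pow (abs_gCoeff_le_one hb1 (by linarith)) hz, ← hsum]
  refine tsum_congr fun n => ?_
  rw [sum_range_alternating_choose_gCoeff b1 (by linarith) n, add_sub_cancel_left]
  ring

theorem g_symm_of_le (a : ℝ) {b1 b2 x y : ℝ} (hb1 : 0 < b1) (hb2 : 0 < b2) (hxy : x ≤ y)
    (h : y - x < 1 - y) : g a b1 b2 x y = g a b2 b1 y x := by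
  have hx : 0 < 1 - x := by linarith
  have hy : 0 < 1 - y := by linarith
  set z := (y - x) / (1 - x) with hz
  have hz_abs : |z| < 1 / 2 := by
    rw [abs_of_nonneg (div_nonneg (by linarith) hx.le), div_lt_iff₀ hx]
    linarith
  have h1z : 1 - z = (1 - y) / (1 - x) := by
    rw [hz]
    field_simp
    ring
  have hw : (x - y) / (1 - y) = -z / (1 - z) := by
    rw [h1z, hz]
    field_simp
    ring
  have hlog : log (1 / (1 - x)) = log (1 / (1 - y)) + log (1 - z) := by
    rw [h1z, log_div hy.ne' hx.ne', one_div, one_div, log_inv, log_inv]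
    ring
  have hg : g a b1 b2 x y = log (1 / (1 - x)) + 2 * psi 1 - psi a - psi (b1 + b2) +
      ∑' k, gCoeff b2 (b1 + b2) k * z ^ (k + 1) := rfl
  have hg' : g a b2 b1 y x = log (1 / (1 - y)) + 2 * psi 1 - psi a - psi (b1 + b2) +
      ∑' k, gCoeff b1 (b1 + b2) k * (-z / (1 - z)) ^ (k + 1) := by
    rw [g, add_comm b2 b1, hw]
    rfl
  rw [hg, hg', tsum_gCoeff_mul_neg_div_one_sub_pow hb1 hb2 hz_abs, hlog]
  ring

theorem g_symm_general (a b1 b2 x y : ℝ) (hb1 : 0 < b1) (hb2 : 0 < b2)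
    (h1 : |x - y| < 1 - x) (h2 : |x - y| < 1 - y) :
    g a b1 b2 x y = g a b2 b1 y x := by
  rcases le_total x y with hxy | hyx
  · rw [abs_sub_comm, abs_of_nonneg (sub_nonneg.2 hxy)] at h2
    exact g_symm_of_le a hb1 hb2 hxy h2
  · rw [abs_of_nonneg (sub_nonneg.2 hyx)] at h1
    exact (g_symm_of_le a hb2 hb1 hyx h1).symm

/-- permutation symmetry of `g`. -/
theorem g_symm (a b1 b2 x y : ℝ) (ha : 0 < a) (hb1 : 0 < b1) (hb2 : 0 < b2)
    (hx0 : 0 ≤ x) (hx1 : x < 1) (hy0 : 0 ≤ y) (hy1 : y < 1)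
    (h1 : |x - y| < 1 - x) (h2 : |x - y| < 1 - y) :
    g a b1 b2 x y = g a b2 b1 y x :=
  g_symm_general a b1 b2 x y hb1 hb2 h1 h2
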